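/- Let S be a finite bichromatic point set, let B be a blue-cross-safe axis-aligned box, let R_L be an upper-right quadrant range [x_L,∞)×[y_L,∞) and R_U a lower-left range (-∞,x_U]×(-∞,y_U] whose boundaries do not intersect any blue-cross-safe leaf box of a cross-safety partition, and suppose the boundaries of B lie inside R_L ∩ R_U. If p is the leftmost point of P = S ∩ R_L ∩ R_U that does not dominate any red point of P, then p lies on the minimal set of P (no point of P is dominated by p), and p is the leftmost point of its blue-cross-safe cell. -/

import Mathlib

open Classical

noncomputable section

abbrev Pt := ℝ × ℝ

/-- An axis-aligned box in the plane. -/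
structure Box where
  x0 : ℝ
  x1 : ℝ
  y0 : ℝ
  y1 : ℝ
  hx : x0 < x1
  hy : y0 < y1

/-- The cross of a box: the union of its vertical and horizontal strips. -/
def Box.cross (B : Box) : Set Pt :=
  {p | (B.x0 ≤ p.1 ∧ p.1 ≤ B.x1) ∨ (B.y0 ≤ p.2 ∧ p.2 ≤ B.y1)}

/-- The four open quadrants of a box. -/
def Box.NE (B : Box) : Set Pt := {p | B.x1 < p.1 ∧ B.y1 < p.2}
def Box.NW (B : Box) : Set Pt := {p | p.1 < B.x0 ∧ B.y1 < p.2}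
def Box.SE (B : Box) : Set Pt := {p | B.x1 < p.1 ∧ p.2 < B.y0}
def Box.SW (B : Box) : Set Pt := {p | p.1 < B.x0 ∧ p.2 < B.y0}

/-- Membership in the open interior of a box. -/
def Box.inside (B : Box) (p : Pt) : Prop :=
  B.x0 < p.1 ∧ p.1 < B.x1 ∧ B.y0 < p.2 ∧ p.2 < B.y1

/-- Membership in the closed box. -/
def Box.memClosed (B : Box) (p : Pt) : Prop :=
  B.x0 ≤ p.1 ∧ p.1 ≤ B.x1 ∧ B.y0 ≤ p.2 ∧ p.2 ≤ B.y1

/-- `p` avoids the boundary lines of the box and of its quadrants. -/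
def Box.offBoundary (B : Box) (p : Pt) : Prop :=
  p.1 ≠ B.x0 ∧ p.1 ≠ B.x1 ∧ p.2 ≠ B.y0 ∧ p.2 ≠ B.y1

/-- Minimal points of `T` towards the SW corner of the NE quadrant
(the usual minimal points under coordinatewise domination). -/
def neMinSet (T : Set Pt) : Set Pt :=
  {p ∈ T | ∀ q ∈ T, (q.1 ≤ p.1 ∧ q.2 ≤ p.2) → q = p}

/-- Minimal points of `T` towards the SE corner of the NW quadrant. -/
def nwMinSet (T : Set Pt) : Set Pt :=
  {p ∈ T | ∀ q ∈ T, (p.1 ≤ q.1 ∧ q.2 ≤ p.2) → q = p}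

/-- Minimal points of `T` towards the NW corner of the SE quadrant. -/
def seMinSet (T : Set Pt) : Set Pt :=
  {p ∈ T | ∀ q ∈ T, (q.1 ≤ p.1 ∧ p.2 ≤ q.2) → q = p}

/-- Minimal points of `T` towards the NE corner of the SW quadrant
(the usual maximal points under coordinatewise domination). -/
def swMinSet (T : Set Pt) : Set Pt :=
  {p ∈ T | ∀ q ∈ T, (p.1 ≤ q.1 ∧ p.2 ≤ q.2) → q = p}

/-- `z` lies in the open axis-aligned rectangle spanned by `p` and `q`. -/
def openRect (p q z : Pt) : Prop :=
  min p.1 q.1 < z.1 ∧ z.1 < max p.1 q.1 ∧ min p.2 q.2 < z.2 ∧ z.2 < max p.2 q.2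

/-- `p` and `q` see each other in `S`: the open rectangle they span is empty of `S`. -/
def sees (S : Set Pt) (p q : Pt) : Prop := ∀ z ∈ S, ¬ openRect p q z

/-- `p` participates in `S`: some point of the opposite color sees `p`. -/
def participates (S : Set Pt) (color : Pt → Bool) (p : Pt) : Prop :=
  ∃ q ∈ S, color q ≠ color p ∧ sees S p q

/-- All points of `S` in the cross of `B` have color `c`. -/
def crossSafeFor (S : Set Pt) (color : Pt → Bool) (c : Bool) (B : Box) : Prop :=
  ∀ p ∈ S, p ∈ B.cross → color p = c

/-- `B` is `c`-safe for `S`: `c`-cross-safe and the four directional minimal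
sets of the quadrants only contain points of color `c`. -/
def safeFor (S : Set Pt) (color : Pt → Bool) (c : Bool) (B : Box) : Prop :=
  crossSafeFor S color c B ∧
  (∀ p ∈ neMinSet (S ∩ B.NE), color p = c) ∧
  (∀ p ∈ nwMinSet (S ∩ B.NW), color p = c) ∧
  (∀ p ∈ seMinSet (S ∩ B.SE), color p = c) ∧
  (∀ p ∈ swMinSet (S ∩ B.SW), color p = c)

/-- `B` is safe: red-safe (`true`) or blue-safe (`false`). -/
def isSafe (S : Set Pt) (color : Pt → Bool) (B : Box) : Prop :=
  safeFor S color true B ∨ safeFor S color false B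

/-- General position: pairwise distinct x-coordinates and y-coordinates. -/
def genPos (S : Set Pt) : Prop :=
  ∀ p ∈ S, ∀ q ∈ S, p ≠ q → p.1 ≠ q.1 ∧ p.2 ≠ q.2

/-- `Prt` is a partition of the finite point set `S`. -/
def isPartition (S : Finset Pt) (Prt : Finset (Finset Pt)) : Prop :=
  (∀ C ∈ Prt, C ⊆ S ∧ C.Nonempty) ∧ (∀ p ∈ S, ∃! C, C ∈ Prt ∧ p ∈ C)

/-- A respectful partition: every part is a singleton or enclosed in a safe box. -/
def respectful (S : Finset Pt) (color : Pt → Bool) (Prt : Finset (Finset Pt)) : Prop :=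
  ∀ C ∈ Prt, C.card = 1 ∨
    ∃ B : Box, (∀ q ∈ S, B.offBoundary q) ∧ isSafe (↑S) color B ∧ ∀ q ∈ C, B.inside q

/-- Entropy of a partition of an `n`-point set (logarithms base 2). -/
def partitionEntropy (n : ℕ) (Prt : Finset (Finset Pt)) : ℝ :=
  ∑ C ∈ Prt, ((C.card : ℝ) / n) * Real.logb 2 ((n : ℝ) / (C.card : ℝ))

/-- Structural entropy: infimum of entropies of respectful partitions. -/
def structEntropy (S : Finset Pt) (color : Pt → Bool) : ℝ :=
  sInf {x : ℝ | ∃ Prt : Finset (Finset Pt),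
    isPartition S Prt ∧ respectful S color Prt ∧ x = partitionEntropy S.card Prt}

/-! A point of `P` dominated by `p` dominates no red point either, so it lies weakly right of
`p`, and general position makes it `p` itself. For the cell of `p`: its box is blue-cross-safe, so a
red point dominated by a point of the cell lies south-west of the whole box and is therefore
dominated by `p` too; and since the box does not meet the boundaries of `R_L` and `R_U`, the cell
lies in `P`. Hence every point of the cell dominates no red point of `P`, and the choice of `p` as
the leftmost such point finishes the proof. -/

def dominatesNoRed (P : Set Pt) (color : Pt → Bool) (q : Pt) : Prop :=
  ∀ r ∈ P, color r = true → ¬ (r.1 ≤ q.1 ∧ r.2 ≤ q.2)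

namespace dominatesNoRed

variable {P : Set Pt} {color : Pt → Bool} {p q : Pt}

theorem color_eq_false (h : dominatesNoRed P color p) (hp : p ∈ P) : color p = false :=
  Bool.eq_false_iff.2 fun hred => h p hp hred ⟨le_rfl, le_rfl⟩

theorem of_dominated (h : dominatesNoRed P color p) (hqp : q.1 ≤ p.1 ∧ q.2 ≤ p.2) :
    dominatesNoRed P color q :=
  fun r hr hred hrq => h r hr hred ⟨hrq.1.trans hqp.1, hrq.2.trans hqp.2⟩

end dominatesNoRed

theorem mem_neMinSet_of_leftmost_dominatesNoRed {S P : Set Pt} {color : Pt → Bool} {p : Pt}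
    (hgp : genPos S) (hPS : P ⊆ S) (hp : p ∈ P) (hpfree : dominatesNoRed P color p)
    (hleft : ∀ q ∈ P, dominatesNoRed P color q → p.1 ≤ q.1) : p ∈ neMinSet P := by
  refine ⟨hp, fun q hq hqp => ?_⟩
  by_contra hne
  have hpq : p.1 ≤ q.1 := hleft q hq (hpfree.of_dominated hqp)
  exact (hgp q (hPS hq) p (hPS hp) hne).1 (le_antisymm hqp.1 hpq)

theorem Box.inside.mem_cross {B : Box} {p : Pt} (h : B.inside p) : p ∈ B.cross :=
  Or.inl ⟨h.1.le, h.2.1.le⟩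

section CrossSafe

variable {S : Set Pt} {color : Pt → Bool} {c : Bool} {B : Box}

theorem crossSafeFor.color_eq_of_inside (hB : crossSafeFor S color c B) {p : Pt} (hp : p ∈ S)
    (hin : B.inside p) : color p = c :=
  hB p hp hin.mem_cross

theorem crossSafeFor.mem_SW_of_dominated_by_inside (hB : crossSafeFor S color c B) {q r : Pt}
    (hr : r ∈ S) (hrc : color r ≠ c) (hq : B.inside q) (hrq : r.1 ≤ q.1 ∧ r.2 ≤ q.2) :
    r ∈ B.SW := by
  constructor
  · by_contra! h
    exact hrc (hB r hr (Or.inl ⟨h, hrq.1.trans hq.2.1.le⟩))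
  · by_contra! h
    exact hrc (hB r hr (Or.inr ⟨h, hrq.2.trans hq.2.2.2.le⟩))

theorem crossSafeFor.dominatesNoRed_of_inside {P : Set Pt} (hB : crossSafeFor S color false B)
    (hPS : P ⊆ S) {p q : Pt} (hpfree : dominatesNoRed P color p) (hp : B.inside p)
    (hq : B.inside q) : dominatesNoRed P color q := by
  intro r hr hred hrq
  have hSW := hB.mem_SW_of_dominated_by_inside (hPS hr) (by simp [hred]) hq hrq
  exact hpfree r hr hred ⟨(hSW.1.trans hp.1).le, (hSW.2.trans hp.2.2.1).le⟩

end CrossSafe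

section QuadrantBoundary

variable {B : Box} {a b : ℝ} {p q : Pt}

theorem Box.corner_le_of_inside_of_avoids_boundary
    (hB : ∀ z : Pt, B.memClosed z → ¬ ((z.1 = a ∧ b ≤ z.2) ∨ (z.2 = b ∧ a ≤ z.1)))
    (hp : B.inside p) (hq : B.inside q) (hpa : a ≤ p.1) (hpb : b ≤ p.2) :
    a ≤ q.1 ∧ b ≤ q.2 := by
  constructor
  · by_contra! h
    exact hB (a, p.2) ⟨hq.1.le.trans h.le, hpa.trans hp.2.1.le, hp.2.2.1.le, hp.2.2.2.le⟩
      (Or.inl ⟨rfl, hpb⟩)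
  · by_contra! h
    exact hB (p.1, b) ⟨hp.1.le, hp.2.1.le, hq.2.2.1.le.trans h.le, hpb.trans hp.2.2.2.le⟩
      (Or.inr ⟨rfl, hpa⟩)

theorem Box.le_corner_of_inside_of_avoids_boundary
    (hB : ∀ z : Pt, B.memClosed z → ¬ ((z.1 = a ∧ z.2 ≤ b) ∨ (z.2 = b ∧ z.1 ≤ a)))
    (hp : B.inside p) (hq : B.inside q) (hpa : p.1 ≤ a) (hpb : p.2 ≤ b) :
    q.1 ≤ a ∧ q.2 ≤ b := by
  constructor
  · by_contra! h
    exact hB (a, p.2) ⟨hp.1.le.trans hpa, h.le.trans hq.2.1.le, hp.2.2.1.le, hp.2.2.2.le⟩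
      (Or.inl ⟨rfl, hpb⟩)
  · by_contra! h
    exact hB (p.1, b) ⟨hp.1.le, hp.2.1.le, hp.2.2.1.le.trans hpb, h.le.trans hq.2.2.2.le⟩
      (Or.inr ⟨rfl, hpa⟩)

end QuadrantBoundary

theorem stmt12_general (S : Finset Pt) (color : Pt → Bool) (hgp : genPos (↑S : Set Pt))
    (xL yL xU yU : ℝ)
    (P : Set Pt)
    (hP : P = {z : Pt | z ∈ (↑S : Set Pt) ∧ xL ≤ z.1 ∧ yL ≤ z.2 ∧ z.1 ≤ xU ∧ z.2 ≤ yU})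
    -- a cross-safety partition of `S` whose blue leaf boxes avoid the boundaries
    -- of `R_L` and `R_U`
    (Prt : Finset (Finset Pt)) (hpart : isPartition S Prt)
    (hboxes : ∀ C ∈ Prt, ∃ Bc : Box,
      (∃ c : Bool, crossSafeFor (↑S : Set Pt) color c Bc) ∧
      (∀ q ∈ C, Bc.inside q) ∧ (∀ q ∈ S, Bc.offBoundary q) ∧
      ((∀ q ∈ C, color q = false) →
        ∀ z : Pt, Bc.memClosed z →
          ¬ ((z.1 = xL ∧ yL ≤ z.2) ∨ (z.2 = yL ∧ xL ≤ z.1)) ∧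
          ¬ ((z.1 = xU ∧ z.2 ≤ yU) ∨ (z.2 = yU ∧ z.1 ≤ xU))))
    -- `p` is the leftmost point of `P` that dominates no red point of `P`
    (p : Pt) (hpP : p ∈ P)
    (hprop : ∀ r ∈ P, color r = true → ¬ (r.1 ≤ p.1 ∧ r.2 ≤ p.2))
    (hleft : ∀ q ∈ P, (∀ r ∈ P, color r = true → ¬ (r.1 ≤ q.1 ∧ r.2 ≤ q.2)) → p.1 ≤ q.1) :
    (∀ q ∈ P, (q.1 ≤ p.1 ∧ q.2 ≤ p.2) → q = p) ∧
    color p = false ∧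
    (∀ C ∈ Prt, p ∈ C → (∀ q ∈ C, color q = false) ∧ ∀ q ∈ C, p.1 ≤ q.1) := by
  have hPS : P ⊆ S := by rw [hP]; exact fun z hz => hz.1
  have hpfree : dominatesNoRed P color p := hprop
  have hblue : color p = false := hpfree.color_eq_false hpP
  refine ⟨(mem_neMinSet_of_leftmost_dominatesNoRed hgp hPS hpP hpfree hleft).2, hblue,
    fun C hC hpC => ?_⟩
  rw [hP] at hpP
  obtain ⟨hpS, hpxL, hpyL, hpxU, hpyU⟩ := hpP
  obtain ⟨Bc, ⟨c, hcs⟩, hins, -, hbd⟩ := hboxes C hC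
  have hpin : Bc.inside p := hins p hpC
  obtain rfl : c = false := (hcs.color_eq_of_inside hpS hpin).symm.trans hblue
  have hCS : C ⊆ S := (hpart.1 C hC).1
  have hCblue : ∀ q ∈ C, color q = false :=
    fun q hq => hcs.color_eq_of_inside (hCS hq) (hins q hq)
  refine ⟨hCblue, fun q hq =>
    hleft q ?_ (hcs.dominatesNoRed_of_inside hPS hpfree hpin (hins q hq))⟩
  obtain ⟨hqxL, hqyL⟩ := Box.corner_le_of_inside_of_avoids_boundary
    (fun z hz => (hbd hCblue z hz).1) hpin (hins q hq) hpxL hpyL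
  obtain ⟨hqxU, hqyU⟩ := Box.le_corner_of_inside_of_avoids_boundary
    (fun z hz => (hbd hCblue z hz).2) hpin (hins q hq) hpxU hpyU
  rw [hP]
  exact ⟨hCS hq, hqxL, hqyL, hqxU, hqyU⟩

/-- Lemma "relevant points suffice": the leftmost point `p` of `P = S ∩ R_L ∩ R_U`
dominating no red point of `P` is blue, lies on the minimal set of `P`, and is the
leftmost point of its (blue-cross-safe) cell of the cross-safety partition. -/
theorem stmt12 (S : Finset Pt) (color : Pt → Bool) (hgp : genPos (↑S : Set Pt))
    (xL yL xU yU : ℝ) (hx : xL ≤ xU) (hy : yL ≤ yU)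
    (P : Set Pt)
    (hP : P = {z : Pt | z ∈ (↑S : Set Pt) ∧ xL ≤ z.1 ∧ yL ≤ z.2 ∧ z.1 ≤ xU ∧ z.2 ≤ yU})
    -- a blue-cross-safe box `B` whose boundary lies inside `R_L ∩ R_U`
    (B : Box) (hB : crossSafeFor (↑S : Set Pt) color false B)
    (hBbd : ∀ z : Pt, B.memClosed z →
      (z.1 = B.x0 ∨ z.1 = B.x1 ∨ z.2 = B.y0 ∨ z.2 = B.y1) →
      (xL ≤ z.1 ∧ yL ≤ z.2 ∧ z.1 ≤ xU ∧ z.2 ≤ yU))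
    -- a cross-safety partition of `S` whose blue leaf boxes avoid the boundaries
    -- of `R_L` and `R_U`
    (Prt : Finset (Finset Pt)) (hpart : isPartition S Prt)
    (hboxes : ∀ C ∈ Prt, ∃ Bc : Box,
      (∃ c : Bool, crossSafeFor (↑S : Set Pt) color c Bc) ∧
      (∀ q ∈ C, Bc.inside q) ∧ (∀ q ∈ S, Bc.offBoundary q) ∧
      ((∀ q ∈ C, color q = false) →
        ∀ z : Pt, Bc.memClosed z →
          ¬ ((z.1 = xL ∧ yL ≤ z.2) ∨ (z.2 = yL ∧ xL ≤ z.1)) ∧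
          ¬ ((z.1 = xU ∧ z.2 ≤ yU) ∨ (z.2 = yU ∧ z.1 ≤ xU))))
    -- `p` is the leftmost point of `P` that dominates no red point of `P`
    (p : Pt) (hpP : p ∈ P)
    (hprop : ∀ r ∈ P, color r = true → ¬ (r.1 ≤ p.1 ∧ r.2 ≤ p.2))
    (hleft : ∀ q ∈ P, (∀ r ∈ P, color r = true → ¬ (r.1 ≤ q.1 ∧ r.2 ≤ q.2)) → p.1 ≤ q.1) :
    (∀ q ∈ P, (q.1 ≤ p.1 ∧ q.2 ≤ p.2) → q = p) ∧
    color p = false ∧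
    (∀ C ∈ Prt, p ∈ C → (∀ q ∈ C, color q = false) ∧ ∀ q ∈ C, p.1 ≤ q.1) :=
  stmt12_general S color hgp xL yL xU yU P hP Prt hpart hboxes p hpP hprop hleft
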